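/- Let L = F(ζ_p) ∩ K(γ̄). If gcd-type condition (#ε(G_L), #γ̄(G_L)) > 1 holds — i.e. the images ε(G_L) and γ̄(G_L) have a common nontrivial divisor of their orders, in particular both are nontrivial — then F(ζ_p) ⊄ K(γ̄ε) ∩ K(γ̄ε^{−1}). -/

import Mathlib

/-!
Suppose `F(ζ) ≤ K(γ̄ε)` and let `ℓ` be a prime dividing both `#ε(G_L)` and `#γ̄(G_L)`. Pick
`σ₁ ∈ G_L` with `ε σ₁ = a` of order `ℓ`. As `k^×` has only one subgroup of order `ℓ`, `a` also
lies in `γ̄(G_L)`. Since `F(ζ)/F` is finite Galois, `G_L = G_{F(ζ)} · ker γ̄`, so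
`γ̄(G_L) = γ̄(G_{F(ζ)})` while `ε` is trivial on `G_{F(ζ)}`. Correcting `σ₁` by an element of
`G_{F(ζ)}` therefore gives `σ` with `γ̄ σ = a⁻¹` and `ε σ = a`. Then `σ ∈ ker (γ̄ε)` fixes
`F(ζ)`, forcing `a = ε σ = 1`, a contradiction.
-/

noncomputable section
open Polynomial

/-- The absolute Galois group of a field `F`. -/
abbrev Gal (F : Type*) [Field F] : Type _ := AlgebraicClosure F ≃ₐ[F] AlgebraicClosure F

/-- The canonical map from the absolute Galois group to ring automorphisms. -/
def galToRingAut (F : Type*) [Field F] :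
    Gal F →* (AlgebraicClosure F ≃+* AlgebraicClosure F) where
  toFun σ := σ.toRingEquiv
  map_one' := rfl
  map_mul' _ _ := rfl

/-- The mod `p` cyclotomic character `ε` of the absolute Galois group of `F`. -/
def modCyc (F : Type*) [Field F] (p : ℕ) [NeZero p]
    (hcard : Nat.card (rootsOfUnity p (AlgebraicClosure F)) = p) :
    Gal F →* (ZMod p)ˣ :=
  (modularCyclotomicCharacter (AlgebraicClosure F) hcard).comp (galToRingAut F)

/-- The inclusion `F_p^× → k^×` for a ring `k` of characteristic `p`. -/
def unitsToField (k : Type*) [CommRing k] (p : ℕ) [CharP k p] : (ZMod p)ˣ →* kˣ :=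
  Units.map (ZMod.castHom dvd_rfl k).toMonoidHom

/-- `K(ψ)`: the fixed field of the kernel of a character `ψ` of `G_K = Gal(Ω/K)`,
regarded as an intermediate field of `Ω/F`. -/
def charFixedField {F : Type*} [Field F] (K : IntermediateField F (AlgebraicClosure F))
    {A : Type*} [CommGroup A] (ψ : ↥K.fixingSubgroup →* A) :
    IntermediateField F (AlgebraicClosure F) :=
  IntermediateField.fixedField ((ψ.ker).map K.fixingSubgroup.subtype)

/-- Functoriality of `GL₂` along a ring homomorphism. -/
def mapGL {R S : Type*} [CommRing R] [CommRing S] (f : R →+* S) :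
    GL (Fin 2) R →* GL (Fin 2) S :=
  Units.map (RingHom.toMonoidHom f.mapMatrix)

/-- A number field is totally real if all of its infinite places are real. -/
def TotallyReal (F : Type*) [Field F] [NumberField F] : Prop :=
  ∀ v : NumberField.InfinitePlace F, v.IsReal

/-- The finite places of a number field `F`. -/
abbrev Place (F : Type*) [Field F] [NumberField F] : Type _ :=
  IsDedekindDomain.HeightOneSpectrum (NumberField.RingOfIntegers F)

/-- The cardinality `q_v` of the residue field at a finite place `v`. -/
def qv {F : Type*} [Field F] [NumberField F] (v : Place F) : ℕ :=
  Ideal.absNorm v.asIdeal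

open IntermediateField

theorem modularCyclotomicCharacter_eq_one_of_apply_eq {L : Type*} [CommRing L] [IsDomain L]
    {n : ℕ} [NeZero n] (hn : Nat.card (rootsOfUnity n L) = n) {g : L ≃+* L} {ζ : L}
    (hζ : IsPrimitiveRoot ζ n) (h : g ζ = ζ) : modularCyclotomicCharacter L hn g = 1 := by
  have hspec := modularCyclotomicCharacter.spec L hn g (SetLike.coe_mem hζ.toRootsOfUnity)
  rw [hζ.val_toRootsOfUnity_coe, h] at hspec
  have hone : ζ ^ (1 : ZMod n).val = ζ := by
    rw [ZMod.val_one_eq_one_mod, hζ.eq_orderOf, pow_mod_orderOf, pow_one]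
  refine Units.ext (ZMod.val_injective n (hζ.pow_inj (ZMod.val_lt _) (ZMod.val_lt _) ?_))
  rw [Units.val_one, hone, ← hspec]

theorem modCyc_eq_one_of_mem_fixingSubgroup {F : Type*} [Field F] {p : ℕ} [NeZero p]
    (hcard : Nat.card (rootsOfUnity p (AlgebraicClosure F)) = p) {ζ : AlgebraicClosure F}
    (hζ : IsPrimitiveRoot ζ p) {σ : Gal F} (hσ : σ ∈ (adjoin F {ζ}).fixingSubgroup) :
    modCyc F p hcard σ = 1 :=
  modularCyclotomicCharacter_eq_one_of_apply_eq hcard hζ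
    ((IntermediateField.mem_fixingSubgroup_iff _ σ).mp hσ ζ (mem_adjoin_simple_self F ζ))

theorem unitsToField_injective (k : Type*) [Field k] (p : ℕ) [Fact p.Prime] [CharP k p] :
    Function.Injective (unitsToField k p) :=
  Units.map_injective (ZMod.castHom dvd_rfl k).injective

theorem Subgroup.mem_of_orderOf_eq_prime_of_dvd_natCard {k : Type*} [CommRing k] [IsDomain k]
    (A : Subgroup kˣ) [Finite A] {ℓ : ℕ} [Fact ℓ.Prime] (hℓ : ℓ ∣ Nat.card A) {a : kˣ}
    (ha : orderOf a = ℓ) : a ∈ A := by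
  obtain ⟨b, hb⟩ := exists_prime_orderOf_dvd_card' ℓ hℓ
  have hbprim : IsPrimitiveRoot ((b : kˣ) : k) ℓ :=
    IsPrimitiveRoot.coe_units_iff.mpr ((Subgroup.orderOf_coe b).trans hb ▸ .orderOf (b : kˣ))
  obtain ⟨i, -, hi⟩ := hbprim.eq_pow_of_pow_eq_one (ξ := (a : k))
    (by rw [← Units.val_pow_eq_pow_val, ← ha, pow_orderOf_eq_one, Units.val_one])
  have hba : (b : kˣ) ^ i = a := Units.ext (by rw [Units.val_pow_eq_pow_val, hi])
  exact hba ▸ A.pow_mem b.2 i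

theorem exists_mul_apply_eq_one_of_map_le {G C : Type*} [Group G] [CommGroup C] {γ χ : G →* C}
    {S N : Subgroup G} (hSN : S.map γ ≤ N.map γ) (hN : N ≤ χ.ker) {a : C}
    (haχ : a ∈ S.map χ) (haγ : a ∈ S.map γ) : ∃ σ, (γ * χ) σ = 1 ∧ χ σ = a := by
  obtain ⟨σ₁, hσ₁, rfl⟩ := Subgroup.mem_map.mp haχ
  have hγσ₁ : γ σ₁ ∈ S.map γ := Subgroup.mem_map_of_mem γ hσ₁
  obtain ⟨t, ht, hγt⟩ := Subgroup.mem_map.mp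
    (hSN (S.map γ |>.mul_mem (S.map γ |>.inv_mem haγ) (S.map γ |>.inv_mem hγσ₁)))
  have hχt : χ t = 1 := hN ht
  refine ⟨σ₁ * t, ?_, by rw [map_mul, hχt, mul_one]⟩
  rw [MonoidHom.mul_apply, map_mul, map_mul, hγt, hχt]
  simp [mul_comm]

theorem exists_mul_inv_mem_fixingSubgroup_of_mem_fixingSubgroup_inf
    {F Ω : Type*} [Field F] [Field Ω] [Algebra F Ω] (E : IntermediateField F Ω)
    [FiniteDimensional F E] [Normal F E] (H : Subgroup (Ω ≃ₐ[F] Ω)) {σ : Ω ≃ₐ[F] Ω}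
    (hσ : σ ∈ (E ⊓ fixedField H).fixingSubgroup) : ∃ h ∈ H, σ * h⁻¹ ∈ E.fixingSubgroup := by
  set res := AlgEquiv.restrictNormalHom (F := F) (K₁ := Ω) E
  have hres : res σ ∈ H.map res := by
    rw [← fixingSubgroup_fixedField (H.map res), IntermediateField.mem_fixingSubgroup_iff]
    intro x hx
    have hxH : (x : Ω) ∈ fixedField H := by
      refine (mem_fixedField_iff _ _).mpr fun h hh ↦ ?_
      rw [← AlgEquiv.restrictNormalHom_apply E h x]
      exact congrArg Subtype.val (hx ⟨res h, Subgroup.mem_map_of_mem res hh⟩)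
    exact Subtype.ext <| (AlgEquiv.restrictNormalHom_apply E σ x).trans
      ((IntermediateField.mem_fixingSubgroup_iff _ σ).mp hσ x ⟨x.2, hxH⟩)
  obtain ⟨h, hh, hhσ⟩ := Subgroup.mem_map.mp hres
  refine ⟨h, hh, ?_⟩
  rw [← E.restrictNormalHom_ker, MonoidHom.mem_ker, map_mul, map_inv, hhσ, mul_inv_cancel]

section CharFixedField

variable {F : Type*} [Field F] {K : IntermediateField F (AlgebraicClosure F)}
  {A : Type*} [CommGroup A]

theorem le_charFixedField (ψ : K.fixingSubgroup →* A) : K ≤ charFixedField K ψ :=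
  (le_iff_le _ _).mpr (Subgroup.map_subtype_le ψ.ker)

theorem mem_fixingSubgroup_of_le_charFixedField {E : IntermediateField F (AlgebraicClosure F)}
    {ψ : K.fixingSubgroup →* A} (hE : E ≤ charFixedField K ψ) {σ : K.fixingSubgroup}
    (hσ : ψ σ = 1) : (σ : Gal F) ∈ E.fixingSubgroup :=
  (le_iff_le _ _).mp hE (Subgroup.mem_map_of_mem _ hσ)

theorem map_comap_fixingSubgroup_inf_charFixedField_le
    (E : IntermediateField F (AlgebraicClosure F)) [FiniteDimensional F E] [Normal F E]
    (ψ : K.fixingSubgroup →* A) :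
    ((E ⊓ charFixedField K ψ).fixingSubgroup.comap K.fixingSubgroup.subtype).map ψ ≤
      (E.fixingSubgroup.comap K.fixingSubgroup.subtype).map ψ := by
  rintro _ ⟨s, hs, rfl⟩
  obtain ⟨_, ⟨h, hh, rfl⟩, hsh⟩ :=
    exists_mul_inv_mem_fixingSubgroup_of_mem_fixingSubgroup_inf E _ (Subgroup.mem_comap.mp hs)
  refine ⟨s * h⁻¹, hsh, ?_⟩
  rw [map_mul, map_inv, MonoidHom.mem_ker.mp hh, inv_one, mul_one]

end CharFixedField

theorem statement10_general
    (p : ℕ) [Fact p.Prime]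
    (F : Type) [Field F]
    (hcard : Nat.card (rootsOfUnity p (AlgebraicClosure F)) = p)
    (ζ : AlgebraicClosure F) (hζ : IsPrimitiveRoot ζ p)
    -- `K` is the unique quadratic subfield of `F(ζ_p)/F`
    (K : IntermediateField F (AlgebraicClosure F))
    (hKζ : K ≤ IntermediateField.adjoin F {ζ})
    -- the coefficient field `k`
    (k : Type) [Field k] [Finite k] [CharP k p]
    -- a character `γ̄` of `G_K`
    (γ : ↥K.fixingSubgroup →* kˣ)
    -- `L = F(ζ_p) ∩ K(γ̄)`
    (L : IntermediateField F (AlgebraicClosure F))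
    (hL : L = IntermediateField.adjoin F {ζ} ⊓ charFixedField K γ)
    -- hypothesis: `(#ε(G_L), #γ̄(G_L)) > 1`
    (hgcd : 1 < Nat.gcd
      (Nat.card (Subgroup.map (modCyc F p hcard) L.fixingSubgroup))
      (Nat.card (Subgroup.map γ (Subgroup.comap K.fixingSubgroup.subtype L.fixingSubgroup)))) :
    -- conclusion
    ¬ IntermediateField.adjoin F {ζ} ≤
        charFixedField K (γ * ((unitsToField k p).comp
          ((modCyc F p hcard).comp K.fixingSubgroup.subtype))) ⊓
        charFixedField K (γ * ((unitsToField k p).comp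
          ((modCyc F p hcard).comp K.fixingSubgroup.subtype))⁻¹) := by
  intro hle
  set χ := (unitsToField k p).comp ((modCyc F p hcard).comp K.fixingSubgroup.subtype)
  have := hζ.intermediateField_adjoin_isCyclotomicExtension F
  have := IsCyclotomicExtension.isGalois {p} F (adjoin F {ζ})
  have := adjoin.finiteDimensional (Algebra.IsIntegral.isIntegral (R := F) ζ)
  obtain ⟨ℓ, hℓ, hℓgcd⟩ := Nat.exists_prime_and_dvd hgcd.ne'
  have := Fact.mk hℓ
  obtain ⟨ā, hā⟩ := exists_prime_orderOf_dvd_card' ℓ (hℓgcd.trans (Nat.gcd_dvd_left _ _))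
  obtain ⟨σ₁, hσ₁L, hσ₁⟩ := Subgroup.mem_map.mp ā.2
  have hord : orderOf (unitsToField k p ā) = ℓ := by
    rw [orderOf_injective _ (unitsToField_injective k p), Subgroup.orderOf_coe, hā]
  have hσ₁K : σ₁ ∈ K.fixingSubgroup :=
    fixingSubgroup_antitone (hL ▸ le_inf hKζ (le_charFixedField γ)) hσ₁L
  obtain ⟨σ, hσ, hχσ⟩ := exists_mul_apply_eq_one_of_map_le (χ := χ)
    (hL ▸ map_comap_fixingSubgroup_inf_charFixedField_le _ γ)
    (fun t ht ↦ show unitsToField k p (modCyc F p hcard t) = 1 by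
      rw [modCyc_eq_one_of_mem_fixingSubgroup hcard hζ (σ := t) ht, map_one])
    ⟨⟨σ₁, hσ₁K⟩, hσ₁L, by simp [χ, hσ₁]⟩
    ((Subgroup.map γ _).mem_of_orderOf_eq_prime_of_dvd_natCard
      (hℓgcd.trans (Nat.gcd_dvd_right _ _)) hord)
  have hεσ : modCyc F p hcard σ = 1 := modCyc_eq_one_of_mem_fixingSubgroup hcard hζ
    (mem_fixingSubgroup_of_le_charFixedField (hle.trans inf_le_left) hσ)
  have hχσ_one : χ σ = 1 := show unitsToField k p (modCyc F p hcard σ) = 1 by rw [hεσ, map_one]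
  exact hℓ.one_lt.ne' (by rw [← hord, ← hχσ, hχσ_one, orderOf_one])

/-- with `L = F(ζ_p) ∩ K(γ̄)`, if the orders of the images `ε(G_L)` and
`γ̄(G_L)` have a nontrivial common divisor (i.e. their gcd is `> 1`), then
`F(ζ_p) ⊄ K(γ̄ε) ∩ K(γ̄ε⁻¹)`. -/
theorem statement10
    (p : ℕ) [Fact p.Prime] (hpodd : Odd p)
    (F : Type) [Field F] [NumberField F] (hF : TotallyReal F)
    (hcard : Nat.card (rootsOfUnity p (AlgebraicClosure F)) = p)
    (ζ : AlgebraicClosure F) (hζ : IsPrimitiveRoot ζ p)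
    -- `K` is the unique quadratic subfield of `F(ζ_p)/F`
    (K : IntermediateField F (AlgebraicClosure F))
    (hKζ : K ≤ IntermediateField.adjoin F {ζ}) (hK2 : Module.finrank F K = 2)
    (hsub : (IntermediateField.adjoin F {ζ}).fixingSubgroup ≤ K.fixingSubgroup)
    -- the coefficient field `k`
    (k : Type) [Field k] [Finite k] [CharP k p]
    -- a character `γ̄` of `G_K`, nontrivial on `G_{F(ζ_p)}`
    (γ : ↥K.fixingSubgroup →* kˣ)
    (hγ : ∃ σ : Gal F, ∃ hσ : σ ∈ (IntermediateField.adjoin F {ζ}).fixingSubgroup,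
      γ ⟨σ, hsub hσ⟩ ≠ 1)
    -- `L = F(ζ_p) ∩ K(γ̄)`
    (L : IntermediateField F (AlgebraicClosure F))
    (hL : L = IntermediateField.adjoin F {ζ} ⊓ charFixedField K γ)
    -- hypothesis: `(#ε(G_L), #γ̄(G_L)) > 1`
    (hgcd : 1 < Nat.gcd
      (Nat.card (Subgroup.map (modCyc F p hcard) L.fixingSubgroup))
      (Nat.card (Subgroup.map γ (Subgroup.comap K.fixingSubgroup.subtype L.fixingSubgroup)))) :
    -- conclusion
    ¬ IntermediateField.adjoin F {ζ} ≤
        charFixedField K (γ * ((unitsToField k p).comp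
          ((modCyc F p hcard).comp K.fixingSubgroup.subtype))) ⊓
        charFixedField K (γ * ((unitsToField k p).comp
          ((modCyc F p hcard).comp K.fixingSubgroup.subtype))⁻¹) :=
  statement10_general p F hcard ζ hζ K hKζ k γ L hL hgcd
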